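/- Suppose for each 0 ≤ i ≤ m we are given a statistic S_i : ⋃_{n≥0} PK(n) → ℕ and a constant c_i ∈ ℕ such that (i) #{p ∈ PK(n) : S_i(p) = k} = C_{n,k} for all n ≥ 0 and k ≥ 0, and (ii) S_i(p) = S_i(P_{i+1}) + c_i for every n ≥ 1 and every p ∈ PK(n) with first-return decomposition (P_1, …, P_{m+1}). Then for every n ≥ 1, Σ_{p ∈ PK(n)} ∏_{i=0}^{m} q_i^{S_i(p)} = (∏_{i=0}^{m} q_i^{c_i}) · Σ_{k=0}^{n−1} C_{n−1,k} · h_k(q_0, …, q_m) in ℤ[q_0,…,q_m]; in particular this joint generating polynomial is a nonnegative-integer linear combination of complete homogeneous symmetric polynomials times a monomial. -/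

import Mathlib

open scoped Classical
open Finset

noncomputable section

/-- The set of positive nondecreasing sequences of length `n` bounded above by `b` is finite. -/
lemma boundedSeq_finite (n : ℕ) (b : ℕ → ℕ) :
    {p : Fin n → ℕ | Monotone p ∧ ∀ i : Fin n, 1 ≤ p i ∧ p i ≤ b i}.Finite := by
  have h : {p : Fin n → ℕ | Monotone p ∧ ∀ i : Fin n, 1 ≤ p i ∧ p i ≤ b i} ⊆
      Set.pi Set.univ (fun i : Fin n => Set.Iic (b i)) := by
    intro p hp
    rw [Set.mem_pi]
    intro i _
    exact (hp.2 i).2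
  exact (Set.Finite.pi fun i : Fin n => Set.finite_Iic (b (i : ℕ))).subset h

/-- The finset of nondecreasing sequences `p : Fin n → ℕ` of positive integers
with `p i ≤ b i` for all `i`. -/
def BSeq (n : ℕ) (b : ℕ → ℕ) : Finset (Fin n → ℕ) := (boundedSeq_finite n b).toFinset

/-- `PK m n` : the u-parking distributions of length `n`, i.e. nondecreasing sequences
of positive integers with `p i ≤ m*(i-1)+1` (here indexed from `0`, so `p i ≤ m*i+1`). -/
def PK (m n : ℕ) : Finset (Fin n → ℕ) := BSeq n (fun i => m * i + 1)

/-- `luck p` : the number of indices `i` with `p i = m*(i-1)+1` (0-indexed: `m*i+1`). -/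
def luck (m : ℕ) {n : ℕ} (p : Fin n → ℕ) : ℕ :=
  (Finset.univ.filter (fun i : Fin n => p i = m * (i : ℕ) + 1)).card

/-- `freq j p` = `ω_j(p)` : the number of indices `i` with `p i = j`. -/
def freq (j : ℕ) {n : ℕ} (p : Fin n → ℕ) : ℕ :=
  (Finset.univ.filter (fun i : Fin n => p i = j)).card

/-- `hcnt m n k r` = `h_{n,k,r}` : the number of nondecreasing sequences of positive
integers with `p_i ≤ m*(i+k-1) - r` for `1 ≤ i ≤ n` (0-indexed: `p i ≤ m*(i+k) - r`). -/
def hcnt (m n k r : ℕ) : ℕ := (BSeq n (fun i => m * (i + k) - r)).card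

/-- `Cnt m n k` = `C_{n,k}` : the number of `p ∈ PK m n` with `luck p = k`. -/
def Cnt (m n k : ℕ) : ℕ := ((PK m n).filter (fun p => luck m p = k)).card

/-- `Rpoly m n` = `R_n(q) = Σ_k C_{n,k} q^k ∈ ℤ[q]`. -/
def Rpoly (m n : ℕ) : Polynomial ℤ :=
  ∑ k ∈ Finset.range (n + 1), (Cnt m n k : Polynomial ℤ) * Polynomial.X ^ k

/-- `hfull t k` : the complete homogeneous symmetric polynomial of degree `k`
in variables `q_0, …, q_{t-1}`, i.e. the sum of all monomials of total degree `k`. -/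
def hfull (t k : ℕ) : MvPolynomial (Fin t) ℤ :=
  ∑ α ∈ Finset.Nat.antidiagonalTuple t k, ∏ i : Fin t, MvPolynomial.X i ^ α i

/-- `ffix m p ℓ` = `i_ℓ(p)` : the first fixed point of type `ℓ`, the smallest `k` with
`2 ≤ k ≤ n` and `p_k ≥ m*(k-2)+1+ℓ` (1-indexed), or `n+1` if there is none. -/
def ffix (m : ℕ) {n : ℕ} (p : Fin n → ℕ) (ℓ : ℕ) : ℕ :=
  sInf ({k | 2 ≤ k ∧ ∃ i : Fin n, (i : ℕ) + 1 = k ∧ m * (k - 2) + 1 + ℓ ≤ p i} ∪ {n + 1})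

/-- The extended first fixed points: `i_0 = 2`, `i_{m+1} = n+1`, and `i_ℓ = ffix m p ℓ`
for `1 ≤ ℓ ≤ m`. -/
def ffixE (m : ℕ) {n : ℕ} (p : Fin n → ℕ) (j : ℕ) : ℕ :=
  if j = 0 then 2 else if j = m + 1 then n + 1 else ffix m p j

/-- `pget p k` = `p_k` (1-indexed), `0` out of range. -/
def pget {n : ℕ} (p : Fin n → ℕ) (k : ℕ) : ℕ := if h : k - 1 < n then p ⟨k - 1, h⟩ else 0

/-- The `(ℓ+1)`-st part `P_{ℓ+1}` (for `0 ≤ ℓ ≤ m`) of the first-return decomposition of `p`: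
the list `(p_k - (p_{i_ℓ} - 1))` for `i_ℓ ≤ k ≤ i_{ℓ+1} - 1`. -/
def FRD (m : ℕ) {n : ℕ} (p : Fin n → ℕ) (ℓ : ℕ) : List ℕ :=
  (List.range (ffixE m p (ℓ + 1) - ffixE m p ℓ)).map
    (fun t => pget p (ffixE m p ℓ + t) - (pget p (ffixE m p ℓ) - 1))

/-- A list is a u-parking distribution: nondecreasing, with `l.get i ∈ [1, m*i+1]`
(0-indexed). -/
def isPKlist (m : ℕ) (l : List ℕ) : Prop :=
  l.Pairwise (· ≤ ·) ∧ ∀ i : Fin l.length, 1 ≤ l.get i ∧ l.get i ≤ m * (i : ℕ) + 1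

/-- `θ(p)` : the nondecreasing rearrangement of the concatenation of `p` with the list of
all `j ∈ {1, …, m*n-m+1}` with `j ≢ 1 (mod m)`. -/
def theta (m n : ℕ) (p : Fin n → ℕ) : List ℕ :=
  Multiset.sort
    ((List.ofFn p : Multiset ℕ) +
      (((List.range (m * n - m + 1)).map (· + 1)).filter
        (fun j => ¬ j ≡ 1 [MOD m]) : List ℕ)) (· ≤ ·)

/-- Parking distributions on the `m`-caterpillar of length `n`, as nondecreasing lists. -/
def PKcat (m n : ℕ) : Set (List ℕ) :=
  {a | a.length = m * n - m + 1 ∧ a.Pairwise (· ≤ ·) ∧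
       (∀ x ∈ a, 1 ≤ x ∧ x ≤ m * n - m + 1) ∧
       (∀ i : ℕ, 1 ≤ i → i ≤ n →
         m * (i - 1) + 1 ≤ (a.filter (fun x => x ≤ m * (i - 1) + 1)).length) ∧
       (∀ j : ℕ, 1 ≤ j → j ≤ m * n - m + 1 → ¬ j ≡ 1 [MOD m] → j ∈ a)}

/-!
The first-return decomposition `p ↦ (P₁, …, P_{m+1})` is a bijection from `PK(n)` onto the
`(m+1)`-tuples of u-parking distributions of total length `n - 1`: the inverse `glue` puts a `1`
in front and shifts the part `P_{ℓ+1}` up by `p_{i_ℓ} - 1 = m (i_ℓ - 2) + ℓ`. By (ii) and (i)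
the generating polynomial therefore factors as `∏ qᵢ^{cᵢ} · ∑_{|s| = n-1} ∏ᵢ R_{sᵢ}(qᵢ)`,
where `R_a(q) = ∑_k C_{a,k} q^k`.

The hypotheses also pin down the numbers `C_{n,k}`: (ii) at `n = 1` forces `cᵢ = 1`, and the
same factorization applied to `S₀` alone gives `∑ₐ C_{a,k} tᵃ = (t P(t)^m)^k` with
`P(t) = ∑ₐ |PK(a)| tᵃ`. Multiplying these series yields `∑_{|s| = N} ∏ᵢ C_{sᵢ,αᵢ} = C_{N,|α|}`,
and collecting the monomials `q^α` by degree turns `∑_{|s| = N} ∏ᵢ R_{sᵢ}(qᵢ)` into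
`∑_k C_{N,k} h_k(q)`.
-/

lemma PowerSeries.coeff_prod_eq_sum_antidiagonalTuple {R : Type*} [CommSemiring R] {t : ℕ}
    (F : Fin t → PowerSeries R) (N : ℕ) :
    PowerSeries.coeff N (∏ j, F j) =
      ∑ s ∈ Nat.antidiagonalTuple t N, ∏ j, PowerSeries.coeff (s j) (F j) := by
  classical
  rw [PowerSeries.coeff_prod, ← piAntidiag_univ_fin_eq_antidiagonalTuple, finsuppAntidiag,
    sum_map, ← sum_attach (piAntidiag univ N)]
  rfl

lemma sum_piFinset_range_eq_sum_antidiagonalTuple {M : Type*} [AddCommMonoid M] {t N : ℕ}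
    (g : (Fin t → ℕ) → M) (hg : ∀ α, N < ∑ i, α i → g α = 0) :
    ∑ α ∈ Fintype.piFinset (fun _ => range (N + 1)), g α =
      ∑ k ∈ range (N + 1), ∑ α ∈ Nat.antidiagonalTuple t k, g α := by
  have hmaps : ∀ α ∈ (Fintype.piFinset fun _ => range (N + 1)).filter
      (fun α : Fin t → ℕ => ∑ i, α i ≤ N), ∑ i, α i ∈ range (N + 1) :=
    fun α hα => mem_range.mpr (Nat.lt_succ_of_le (mem_filter.mp hα).2)
  rw [← sum_filter_of_ne (p := fun α : Fin t → ℕ => ∑ i, α i ≤ N)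
    fun α _ h => not_lt.mp (mt (hg α) h), ← sum_fiberwise_of_maps_to hmaps]
  refine sum_congr rfl fun k hk => sum_congr (ext fun α => ?_) fun _ _ => rfl
  have hk := mem_range.mp hk
  simp only [mem_filter, Fintype.mem_piFinset, mem_range, Nat.mem_antidiagonalTuple]
  refine ⟨fun h => h.2, fun h => ⟨⟨fun i => ?_, by omega⟩, h⟩⟩
  have := single_le_sum (fun j _ => Nat.zero_le (α j)) (mem_univ i)
  omega

lemma apply_length_ofFn {α γ : Type*} (F : (n : ℕ) → (Fin n → γ) → α) {s : ℕ} (q : Fin s → γ) :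
    F (List.ofFn q).length (List.ofFn q).get = F s q := by
  suffices ∀ k (h : k = s), F k (q ∘ Fin.cast h) = F s q from
    (congrArg _ (funext (List.get_ofFn q))).trans (this _ (List.length_ofFn))
  rintro k rfl
  rfl

section Basic

variable {m n : ℕ}

lemma mem_PK {p : Fin n → ℕ} :
    p ∈ PK m n ↔ Monotone p ∧ ∀ i : Fin n, 1 ≤ p i ∧ p i ≤ m * i + 1 := by
  simp [PK, BSeq, Set.Finite.mem_toFinset]

lemma PK_zero (m : ℕ) : PK m 0 = {Fin.elim0} := by
  ext p
  simp only [mem_PK, mem_singleton, IsEmpty.forall_iff, and_true]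
  exact ⟨fun _ => Subsingleton.elim _ _, fun _ _ a => a.elim0⟩

lemma PK_one (m : ℕ) : PK m 1 = {fun _ => 1} := by
  ext p
  simp only [mem_PK, mem_singleton, Fin.forall_fin_one, Fin.val_zero, mul_zero, zero_add]
  constructor
  · rintro ⟨-, h⟩
    funext i
    rw [Subsingleton.elim i 0]
    omega
  · rintro rfl
    exact ⟨monotone_const, le_rfl, le_rfl⟩

lemma luck_le (p : Fin n → ℕ) : luck m p ≤ n :=
  (card_filter_le _ _).trans_eq (card_fin n)

lemma Cnt_eq_zero_of_lt {k : ℕ} (h : n < k) : Cnt m n k = 0 := by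
  rw [Cnt, card_eq_zero, filter_eq_empty_iff]
  exact fun p _ => ((luck_le p).trans_lt h).ne

lemma Cnt_zero (m k : ℕ) : Cnt m 0 k = if k = 0 then 1 else 0 := by
  have hluck : luck m (Fin.elim0 : Fin 0 → ℕ) = 0 := Nat.le_zero.mp (luck_le _)
  rw [Cnt, PK_zero, filter_singleton, hluck]
  by_cases hk : k = 0 <;> simp [hk, eq_comm (a := 0)]

lemma Cnt_one (m k : ℕ) : Cnt m 1 k = if k = 1 then 1 else 0 := by
  have hluck : luck m (fun _ : Fin 1 => 1) = 1 := by simp [luck]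
  rw [Cnt, PK_one, filter_singleton, hluck]
  by_cases hk : k = 1 <;> simp [hk, eq_comm (a := 1)]

/-- The first entry of a u-parking distribution is always lucky. -/
lemma Cnt_succ_zero (m n : ℕ) : Cnt m (n + 1) 0 = 0 := by
  rw [Cnt, card_eq_zero, filter_eq_empty_iff]
  intro p hp
  have h0 := (mem_PK.mp hp).2 0
  refine (card_pos.mpr ⟨0, mem_filter.mpr ⟨mem_univ _, ?_⟩⟩).ne'
  simp only [Fin.val_zero, mul_zero, zero_add] at h0 ⊢
  omega

end Basic

section FirstFixedPoint

variable (m : ℕ) {n : ℕ} (p : Fin n → ℕ)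

lemma ffix_le (ℓ : ℕ) : ffix m p ℓ ≤ n + 1 :=
  Nat.sInf_le (Set.mem_union_right _ rfl)

lemma ffix_spec (ℓ : ℕ) :
    ffix m p ℓ = n + 1 ∨
      2 ≤ ffix m p ℓ ∧ ∃ i : Fin n, (i : ℕ) + 1 = ffix m p ℓ ∧
        m * (ffix m p ℓ - 2) + 1 + ℓ ≤ p i := by
  rcases Nat.sInf_mem (s := {k | 2 ≤ k ∧ ∃ i : Fin n, (i : ℕ) + 1 = k ∧
      m * (k - 2) + 1 + ℓ ≤ p i} ∪ {n + 1}) ⟨n + 1, Set.mem_union_right _ rfl⟩ with h | h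
  · exact Or.inr h
  · exact Or.inl h

lemma two_le_ffix (hn : 1 ≤ n) (ℓ : ℕ) : 2 ≤ ffix m p ℓ := by
  rcases ffix_spec m p ℓ with h | ⟨h, -⟩ <;> omega

variable {m p} in
lemma le_of_lt_ffix {ℓ k : ℕ} (hk : k < ffix m p ℓ) (h2 : 2 ≤ k) (i : Fin n)
    (hik : (i : ℕ) + 1 = k) : p i ≤ m * (k - 2) + ℓ := by
  have h := Nat.notMem_of_lt_sInf hk
  simp only [Set.mem_union, Set.mem_ofPred_eq, not_or, not_and, not_exists] at h
  have := h.1 h2 i hik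
  omega

lemma ffix_mono {ℓ ℓ' : ℕ} (h : ℓ ≤ ℓ') : ffix m p ℓ ≤ ffix m p ℓ' := by
  rcases ffix_spec m p ℓ' with heq | ⟨h2, i, hik, hpi⟩
  · exact heq ▸ ffix_le m p ℓ
  · exact Nat.sInf_le (Set.mem_union_left _ ⟨h2, i, hik, by omega⟩)

lemma ffix_eq_of_forall {ℓ j : ℕ} (h2 : 2 ≤ j) (hj : j ≤ n + 1)
    (hbelow : ∀ i : Fin n, 1 ≤ (i : ℕ) → (i : ℕ) + 1 < j → p i < m * (i - 1) + 1 + ℓ)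
    (hat : ∀ i : Fin n, (i : ℕ) + 1 = j → m * (j - 2) + 1 + ℓ ≤ p i) :
    ffix m p ℓ = j := by
  apply le_antisymm
  · rcases hj.lt_or_eq with hlt | heq
    · exact Nat.sInf_le (Set.mem_union_left _
        ⟨h2, ⟨j - 1, by omega⟩, by simp only; omega, hat ⟨j - 1, by omega⟩ (by simp only; omega)⟩)
    · exact heq ▸ ffix_le m p ℓ
  · refine le_csInf ⟨n + 1, Set.mem_union_right _ rfl⟩ ?_
    rintro k (⟨hk2, i, hik, hik'⟩ | hk)
    · by_contra! hkj
      have := hbelow i (by omega) (by omega)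
      rw [← hik, show (i : ℕ) + 1 - 2 = i - 1 by omega] at hik'
      omega
    · rw [Set.mem_singleton_iff.mp hk]
      exact hj

lemma ffixE_zero : ffixE m p 0 = 2 := rfl

lemma ffixE_last : ffixE m p (m + 1) = n + 1 := by
  simp [ffixE]

lemma ffixE_of_pos_of_le {j : ℕ} (h1 : 1 ≤ j) (h2 : j ≤ m) : ffixE m p j = ffix m p j := by
  rw [ffixE, if_neg (by omega), if_neg (by omega)]

lemma two_le_ffixE (hn : 1 ≤ n) (j : ℕ) : 2 ≤ ffixE m p j := by
  unfold ffixE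
  split_ifs
  · rfl
  · omega
  · exact two_le_ffix m p hn j

lemma ffixE_le (hn : 1 ≤ n) (j : ℕ) : ffixE m p j ≤ n + 1 := by
  unfold ffixE
  split_ifs
  · omega
  · rfl
  · exact ffix_le m p j

lemma ffixE_le_succ (hn : 1 ≤ n) {j : ℕ} (hj : j ≤ m) : ffixE m p j ≤ ffixE m p (j + 1) := by
  rcases hj.eq_or_lt with heq | hlt
  · rw [heq, ffixE_last]
    exact ffixE_le m p hn m
  rw [ffixE_of_pos_of_le m p (by omega) hlt]
  rcases Nat.eq_zero_or_pos j with rfl | hj0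
  · exact two_le_ffix m p hn 1
  · rw [ffixE_of_pos_of_le m p hj0 hj]
    exact ffix_mono m p (by omega)

end FirstFixedPoint

section Parts

variable {m n : ℕ} {p : Fin n → ℕ}

lemma pget_eq (p : Fin n → ℕ) {k : ℕ} (h : k - 1 < n) : pget p k = p ⟨k - 1, h⟩ :=
  dif_pos h

lemma pget_succ (p : Fin n → ℕ) (i : Fin n) : pget p (i + 1) = p i := by
  simp [pget]

lemma pget_mono (hp : p ∈ PK m n) {k k' : ℕ} (hk : 1 ≤ k) (hkk' : k ≤ k') (hk' : k' ≤ n) :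
    pget p k ≤ pget p k' := by
  rw [pget_eq p (by omega), pget_eq p (by omega)]
  exact (mem_PK.mp hp).1 (Fin.mk_le_mk.mpr (by omega))

lemma pget_mem_Icc (hp : p ∈ PK m n) {k : ℕ} (hk : 1 ≤ k) (hkn : k ≤ n) :
    pget p k ∈ Set.Icc 1 (m * (k - 1) + 1) := by
  rw [pget_eq p (by omega)]
  exact (mem_PK.mp hp).2 _

lemma pget_le_of_lt_ffixE (hp : p ∈ PK m n) {ℓ k : ℕ} (hℓ : ℓ ≤ m) (h2 : 2 ≤ k) (hkn : k ≤ n)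
    (hk : k < ffixE m p (ℓ + 1)) : pget p k ≤ m * (k - 2) + ℓ + 1 := by
  rcases hℓ.lt_or_eq with hlt | heq
  · rw [ffixE_of_pos_of_le m p (by omega) hlt] at hk
    rw [pget_eq p (by omega)]
    have := le_of_lt_ffix hk h2 ⟨k - 1, by omega⟩ (by simp only; omega)
    omega
  · have h := (pget_mem_Icc hp (by omega) hkn).2
    have : m * (k - 1) = m * (k - 2) + m := by
      rw [← Nat.mul_succ]; congr 1; omega
    omega

lemma pget_ffixE (hp : p ∈ PK m n) (hn : 1 ≤ n) {ℓ : ℕ} (hℓ : ℓ ≤ m)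
    (hlt : ffixE m p ℓ < ffixE m p (ℓ + 1)) :
    pget p (ffixE m p ℓ) = m * (ffixE m p ℓ - 2) + ℓ + 1 := by
  have h2 := two_le_ffixE m p hn ℓ
  have hkn : ffixE m p ℓ ≤ n := by have := ffixE_le m p hn (ℓ + 1); omega
  have hub := pget_le_of_lt_ffixE hp hℓ h2 hkn hlt
  have hlb : m * (ffixE m p ℓ - 2) + ℓ + 1 ≤ pget p (ffixE m p ℓ) := by
    rcases Nat.eq_zero_or_pos ℓ with rfl | hℓ0
    · simpa [ffixE_zero] using (pget_mem_Icc hp (by omega) hkn).1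
    · rw [ffixE_of_pos_of_le m p hℓ0 hℓ] at hkn ⊢
      rcases ffix_spec m p ℓ with h | ⟨-, i, hik, hpi⟩
      · omega
      · rw [← hik, pget_succ]
        rw [← hik] at hpi
        omega
  omega

variable (m) in
def partFn (p : Fin n → ℕ) (ℓ : ℕ) : Fin (ffixE m p (ℓ + 1) - ffixE m p ℓ) → ℕ :=
  fun t => pget p (ffixE m p ℓ + t) - (pget p (ffixE m p ℓ) - 1)

variable (m) in
lemma FRD_eq_ofFn (p : Fin n → ℕ) (ℓ : ℕ) : FRD m p ℓ = List.ofFn (partFn m p ℓ) :=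
  List.ext_getElem (by simp [FRD]) (fun _ _ _ => by simp [FRD, partFn])

variable (m) in
lemma length_FRD (p : Fin n → ℕ) (ℓ : ℕ) :
    (FRD m p ℓ).length = ffixE m p (ℓ + 1) - ffixE m p ℓ := by
  simp [FRD]

lemma partFn_mem_PK (hp : p ∈ PK m n) (hn : 1 ≤ n) {ℓ : ℕ} (hℓ : ℓ ≤ m) :
    partFn m p ℓ ∈ PK m (ffixE m p (ℓ + 1) - ffixE m p ℓ) := by
  have h2 := two_le_ffixE m p hn ℓ
  have hend := ffixE_le m p hn (ℓ + 1)
  rw [mem_PK]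
  refine ⟨fun a b hab => Nat.sub_le_sub_right (pget_mono hp (by omega)
    (by simp only [Fin.le_def] at hab; omega) (by have := b.2; omega)) _, fun t => ?_⟩
  have ht := t.2
  have hstart := pget_ffixE hp hn hℓ (by omega)
  have hge := pget_mono hp (by omega) (Nat.le_add_right (ffixE m p ℓ) t) (by omega)
  have hle := pget_le_of_lt_ffixE hp hℓ (k := ffixE m p ℓ + t) (by omega) (by omega) (by omega)
  have : m * (ffixE m p ℓ + t - 2) = m * (ffixE m p ℓ - 2) + m * t := by
    rw [← Nat.mul_add]; congr 1; omega
  simp only [partFn]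
  omega

end Parts

section Lists

variable {m : ℕ} {a : List ℕ}

lemma isPKlist_ofFn {s : ℕ} {q : Fin s → ℕ} : isPKlist m (List.ofFn q) ↔ q ∈ PK m s := by
  rw [isPKlist, List.pairwise_ofFn, mem_PK, monotone_iff_forall_lt]
  simp [Fin.forall_iff, List.get_eq_getElem]

lemma isPKlist.getD_mem_Icc (h : isPKlist m a) {t : ℕ} (ht : t < a.length) :
    a.getD t 0 ∈ Set.Icc 1 (m * t + 1) := by
  rw [List.getD_eq_getElem _ _ ht]
  exact h.2 ⟨t, ht⟩

lemma isPKlist.getD_mono (h : isPKlist m a) {t t' : ℕ} (htt' : t ≤ t') (ht' : t' < a.length) :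
    a.getD t 0 ≤ a.getD t' 0 := by
  rw [List.getD_eq_getElem _ _ (by omega), List.getD_eq_getElem _ _ ht']
  rcases htt'.eq_or_lt with rfl | hlt
  · rfl
  · exact List.pairwise_iff_getElem.mp h.1 _ _ _ _ hlt

lemma isPKlist_FRD {n : ℕ} {p : Fin n → ℕ} (hp : p ∈ PK m n) (hn : 1 ≤ n) {ℓ : ℕ} (hℓ : ℓ ≤ m) :
    isPKlist m (FRD m p ℓ) := by
  rw [FRD_eq_ofFn, isPKlist_ofFn]
  exact partFn_mem_PK hp hn hℓ

end Lists

section Glue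

variable {m n : ℕ}

def block (l : Fin (m + 1) → List ℕ) (j : ℕ) : List ℕ :=
  if h : j < m + 1 then l ⟨j, h⟩ else []

def blockStart (l : Fin (m + 1) → List ℕ) (t : ℕ) : ℕ :=
  ∑ j ∈ range t, (block l j).length

def blockIdx (l : Fin (m + 1) → List ℕ) (x : ℕ) : ℕ :=
  sInf {ℓ | x < blockStart l (ℓ + 1)}

/-- The inverse of the first-return decomposition. The entry `x + 2` (1-indexed) lies in the
block `ℓ = blockIdx l x`, which starts at `i_ℓ = blockStart l ℓ + 2`; it is shifted up by
`p_{i_ℓ} - 1 = m * (i_ℓ - 2) + ℓ`. -/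
def glue (m n : ℕ) (l : Fin (m + 1) → List ℕ) : Fin n → ℕ := fun j =>
  if (j : ℕ) = 0 then 1 else
    (block l (blockIdx l (j - 1))).getD (j - 1 - blockStart l (blockIdx l (j - 1))) 0
      + m * blockStart l (blockIdx l (j - 1)) + blockIdx l (j - 1)

variable {l : Fin (m + 1) → List ℕ}

lemma block_fin (i : Fin (m + 1)) : block l i = l i := dif_pos i.2

lemma blockStart_zero : blockStart l 0 = 0 := sum_range_zero _

lemma blockStart_succ (t : ℕ) : blockStart l (t + 1) = blockStart l t + (block l t).length :=
  sum_range_succ _ t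

lemma blockStart_mono {t t' : ℕ} (h : t ≤ t') : blockStart l t ≤ blockStart l t' :=
  sum_le_sum_of_subset (range_subset_range.mpr h)

lemma blockStart_last : blockStart l (m + 1) = ∑ i, (l i).length := by
  rw [blockStart, ← Fin.sum_univ_eq_sum_range]
  simp only [block_fin]

lemma isPKlist_block (hl : ∀ i, isPKlist m (l i)) (j : ℕ) : isPKlist m (block l j) := by
  unfold block
  split_ifs
  · exact hl _
  · exact ⟨List.Pairwise.nil, fun i => i.elim0⟩

lemma glue_of_eq_zero (j : Fin n) (hj : (j : ℕ) = 0) : glue m n l j = 1 := if_pos hj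

lemma glue_of_eq_succ {x : ℕ} (j : Fin n) (hj : (j : ℕ) = x + 1) :
    glue m n l j = (block l (blockIdx l x)).getD (x - blockStart l (blockIdx l x)) 0
      + m * blockStart l (blockIdx l x) + blockIdx l x := by
  simp [glue, hj]

section Sized

variable (hsum : ∑ i, (l i).length = n - 1)
include hsum

lemma blockIdx_lt_iff {x : ℕ} (hx : x < n - 1) {ℓ : ℕ} :
    blockIdx l x < ℓ ↔ x < blockStart l ℓ := by
  constructor
  · intro h
    have hne : {ℓ | x < blockStart l (ℓ + 1)}.Nonempty := ⟨m, by simpa [blockStart_last, hsum]⟩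
    exact (Nat.sInf_mem hne).trans_le (blockStart_mono h)
  · intro h
    have hℓ : ℓ ≠ 0 := by rintro rfl; simp [blockStart_zero] at h
    exact (Nat.sInf_le (show ℓ - 1 ∈ {ℓ | x < blockStart l (ℓ + 1)} by
      simpa [Nat.sub_add_cancel (Nat.pos_of_ne_zero hℓ)])).trans_lt (by omega)

lemma blockIdx_le {x : ℕ} (hx : x < n - 1) : blockIdx l x ≤ m :=
  Nat.lt_succ_iff.mp ((blockIdx_lt_iff hsum hx).mpr (by rwa [blockStart_last, hsum]))

lemma blockStart_blockIdx_le {x : ℕ} (hx : x < n - 1) : blockStart l (blockIdx l x) ≤ x :=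
  not_lt.mp ((blockIdx_lt_iff hsum hx).not.mp (lt_irrefl _))

lemma lt_blockStart_blockIdx_succ {x : ℕ} (hx : x < n - 1) :
    x < blockStart l (blockIdx l x + 1) :=
  (blockIdx_lt_iff hsum hx).mp (Nat.lt_succ_self _)

lemma blockIdx_eq {x ℓ : ℕ} (hx : x < n - 1) (h1 : blockStart l ℓ ≤ x)
    (h2 : x < blockStart l (ℓ + 1)) : blockIdx l x = ℓ := by
  have := (blockIdx_lt_iff hsum hx).mpr h2
  have := (blockIdx_lt_iff hsum hx (ℓ := ℓ)).not.mpr (not_lt.mpr h1)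
  omega

lemma blockIdx_mono {x x' : ℕ} (hxx' : x ≤ x') (hx' : x' < n - 1) :
    blockIdx l x ≤ blockIdx l x' :=
  Nat.lt_succ_iff.mp ((blockIdx_lt_iff hsum (by omega)).mpr
    (hxx'.trans_lt (lt_blockStart_blockIdx_succ hsum hx')))

lemma pget_glue (hn : 1 ≤ n) (i : Fin (m + 1)) {t : ℕ} (ht : t < (l i).length) :
    pget (glue m n l) (blockStart l i + 2 + t) = (l i).getD t 0 + m * blockStart l i + i := by
  have hlen : blockStart l (i + 1) ≤ n - 1 :=
    hsum ▸ blockStart_last (l := l) ▸ blockStart_mono (by omega)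
  have hsucc := blockStart_succ (l := l) i
  rw [block_fin] at hsucc
  have hx : blockStart l i + t < n - 1 := by omega
  rw [pget_eq _ (by omega), glue_of_eq_succ _ (x := blockStart l i + t) (by simp only; omega),
    blockIdx_eq hsum hx (Nat.le_add_right _ _) (by omega), block_fin, Nat.add_sub_cancel_left]

variable (hl : ∀ i, isPKlist m (l i))
include hl

lemma glue_mem_Icc {x : ℕ} (hx : x < n - 1) (j : Fin n) (hj : (j : ℕ) = x + 1) :
    glue m n l j ∈ Set.Icc (m * blockStart l (blockIdx l x) + blockIdx l x + 1)
      (m * x + blockIdx l x + 1) := by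
  have h1 := blockStart_blockIdx_le hsum hx
  have h2 := lt_blockStart_blockIdx_succ hsum hx
  rw [blockStart_succ] at h2
  obtain ⟨hb1, hb2⟩ := (isPKlist_block hl (blockIdx l x)).getD_mem_Icc
    (t := x - blockStart l (blockIdx l x)) (by omega)
  have : m * (x - blockStart l (blockIdx l x)) + m * blockStart l (blockIdx l x) = m * x := by
    rw [← Nat.mul_add]; congr 1; omega
  rw [glue_of_eq_succ j hj]
  constructor <;> omega

lemma glue_mono : Monotone (glue m n l) := by
  intro j j' hjj'
  rw [Fin.le_def] at hjj'
  rcases Nat.eq_zero_or_pos (j : ℕ) with h0 | hj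
  · rw [glue_of_eq_zero j h0]
    rcases Nat.eq_zero_or_pos (j' : ℕ) with h0' | hj'
    · rw [glue_of_eq_zero j' h0']
    · have := (glue_mem_Icc hsum hl (x := j' - 1) (by omega) j' (by omega)).1
      omega
  set x := (j : ℕ) - 1
  set x' := (j' : ℕ) - 1
  have hx' : x' < n - 1 := by omega
  have hB := blockIdx_mono hsum (x := x) (x' := x') (by omega) hx'
  rcases hB.lt_or_eq with hlt | heq
  · have h1 := (glue_mem_Icc hsum hl (x := x) (by omega) j (by omega)).2
    have h2 := (glue_mem_Icc hsum hl hx' j' (by omega)).1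
    have h3 : x < blockStart l (blockIdx l x') :=
      (lt_blockStart_blockIdx_succ hsum (by omega)).trans_le (blockStart_mono hlt)
    have := Nat.mul_le_mul_left m h3.le
    omega
  · rw [glue_of_eq_succ j (x := x) (by omega), glue_of_eq_succ j' (x := x') (by omega), heq]
    have h1 := blockStart_blockIdx_le hsum (x := x) (by omega)
    have h2 := lt_blockStart_blockIdx_succ hsum hx'
    rw [heq] at h1
    rw [blockStart_succ] at h2
    have := (isPKlist_block hl (blockIdx l x')).getD_mono
      (t := x - blockStart l (blockIdx l x')) (t' := x' - blockStart l (blockIdx l x'))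
      (by omega) (by omega)
    omega

lemma glue_mem_PK : glue m n l ∈ PK m n := by
  refine mem_PK.mpr ⟨glue_mono hsum hl, fun j => ?_⟩
  rcases Nat.eq_zero_or_pos (j : ℕ) with h0 | hj
  · rw [glue_of_eq_zero j h0, h0]
    omega
  · obtain ⟨h1, h2⟩ := glue_mem_Icc hsum hl (x := j - 1) (by omega) j (by omega)
    have := blockIdx_le hsum (x := j - 1) (by omega)
    have : m * ((j : ℕ) - 1) + m = m * j := by
      rw [← Nat.mul_succ]; congr 1; omega
    omega


lemma ffix_glue (hn : 1 ≤ n) {ℓ : ℕ} (hℓm : ℓ ≤ m) :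
    ffix m (glue m n l) ℓ = blockStart l ℓ + 2 := by
  have hℓ : blockStart l ℓ ≤ n - 1 :=
    hsum ▸ blockStart_last (l := l) ▸ blockStart_mono (by omega)
  refine ffix_eq_of_forall m _ (by omega) (by omega) (fun i hi1 hij => ?_) (fun i hij => ?_)
  · have hB := (blockIdx_lt_iff hsum (x := i - 1) (ℓ := ℓ) (by omega)).mpr (by omega)
    have := (glue_mem_Icc hsum hl (x := i - 1) (by omega) i (by omega)).2
    omega
  · have hx : blockStart l ℓ < n - 1 := by omega
    have hB := not_lt.mp ((blockIdx_lt_iff hsum hx (ℓ := ℓ)).not.mpr (lt_irrefl _))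
    have hstart : blockStart l (blockIdx l (blockStart l ℓ)) = blockStart l ℓ :=
      le_antisymm (blockStart_blockIdx_le hsum hx) (blockStart_mono hB)
    have := (glue_mem_Icc hsum hl hx i (by omega)).1
    rw [hstart] at this
    rw [show blockStart l ℓ + 2 - 2 = blockStart l ℓ by omega]
    omega

lemma ffixE_glue (hn : 1 ≤ n) {ℓ : ℕ} (hℓ : ℓ ≤ m + 1) :
    ffixE m (glue m n l) ℓ = blockStart l ℓ + 2 := by
  rcases Nat.eq_zero_or_pos ℓ with rfl | hℓ0
  · rw [ffixE_zero, blockStart_zero]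
  rcases hℓ.lt_or_eq with hlt | rfl
  · rw [ffixE_of_pos_of_le m _ hℓ0 (by omega)]
    exact ffix_glue hsum hl hn (by omega)
  · rw [ffixE_last, blockStart_last, hsum]
    omega

lemma FRD_glue (hn : 1 ≤ n) (i : Fin (m + 1)) : FRD m (glue m n l) i = l i := by
  have hE := ffixE_glue hsum hl hn (ℓ := i) (by omega)
  have hE' := ffixE_glue hsum hl hn (ℓ := i + 1) (by omega)
  have hsucc := blockStart_succ (l := l) i
  rw [block_fin] at hsucc
  have hlen : (FRD m (glue m n l) i).length = (l i).length := by
    rw [length_FRD, hE, hE']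
    omega
  refine List.ext_getElem hlen fun t ht ht' => ?_
  obtain ⟨h0, h0'⟩ := (hl i).getD_mem_Icc (t := 0) (by omega)
  have hpg0 := pget_glue hsum hn i (t := 0) (by omega)
  simp only [FRD, List.getElem_map, List.getElem_range, hE, add_zero] at hpg0 ⊢
  rw [pget_glue hsum hn i ht', hpg0, ← List.getD_eq_getElem _ 0 ht']
  omega

end Sized

section Decomposition

variable {p : Fin n → ℕ}

lemma getD_FRD {ℓ t : ℕ} (ht : t < (FRD m p ℓ).length) :
    (FRD m p ℓ).getD t 0 = pget p (ffixE m p ℓ + t) - (pget p (ffixE m p ℓ) - 1) := by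
  rw [List.getD_eq_getElem _ _ ht]
  simp [FRD]

lemma blockStart_FRD (hn : 1 ≤ n) {t : ℕ} (ht : t ≤ m + 1) :
    blockStart (fun i : Fin (m + 1) => FRD m p i) t = ffixE m p t - 2 := by
  induction t with
  | zero => rw [blockStart_zero, ffixE_zero]
  | succ t ih =>
    have h1 := ffixE_le_succ m p hn (j := t) (by omega)
    have h2 := two_le_ffixE m p hn t
    have hlen : (block (fun i : Fin (m + 1) => FRD m p i) t).length =
        ffixE m p (t + 1) - ffixE m p t := by
      rw [block, dif_pos (by omega)]
      exact length_FRD m p t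
    rw [blockStart_succ, ih (by omega), hlen]
    omega

lemma sum_length_FRD (hn : 1 ≤ n) (p : Fin n → ℕ) :
    ∑ i : Fin (m + 1), (FRD m p i).length = n - 1 := by
  rw [← blockStart_last (l := fun i : Fin (m + 1) => FRD m p i), blockStart_FRD hn le_rfl,
    ffixE_last]
  omega

lemma glue_FRD (hp : p ∈ PK m n) (hn : 1 ≤ n) :
    glue m n (fun i : Fin (m + 1) => FRD m p i) = p := by
  set l := fun i : Fin (m + 1) => FRD m p i
  have hsum : ∑ i, (l i).length = n - 1 := sum_length_FRD hn p
  funext j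
  rcases Nat.eq_zero_or_pos (j : ℕ) with h0 | hj
  · have := (mem_PK.mp hp).2 j
    rw [glue_of_eq_zero j h0]
    rw [h0] at this
    omega
  set x := (j : ℕ) - 1
  have hx : x < n - 1 := by omega
  obtain ⟨B, hBx⟩ : ∃ B, blockIdx l x = B := ⟨_, rfl⟩
  have hB := hBx ▸ blockIdx_le hsum hx
  have h1 := hBx ▸ blockStart_blockIdx_le hsum hx
  have h2 := hBx ▸ lt_blockStart_blockIdx_succ hsum hx
  rw [blockStart_FRD hn (by omega)] at h1 h2
  have h3 := two_le_ffixE m p hn B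
  have hstart := pget_ffixE hp hn hB (by omega)
  have hmono := pget_mono hp (by omega) (k' := j + 1) (by omega : ffixE m p B ≤ j + 1) (by omega)
  rw [pget_succ] at hmono
  have hblock : block l B = FRD m p B := dif_pos (by omega)
  rw [glue_of_eq_succ j (x := x) (by omega), hBx, hblock, blockStart_FRD hn (by omega),
    getD_FRD (by rw [length_FRD]; omega), show ffixE m p B + (x - (ffixE m p B - 2)) = j + 1 by
      omega, pget_succ]
  omega

end Decomposition

end Glue

section Tuples

variable {m k N : ℕ} {β : Type*} [CommSemiring β]

def PKTuples (m k N : ℕ) : Finset (Fin k → List ℕ) :=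
  (Nat.antidiagonalTuple k N).biUnion fun s =>
    Fintype.piFinset fun i => (PK m (s i)).image List.ofFn

lemma mem_PKTuples {l : Fin k → List ℕ} :
    l ∈ PKTuples m k N ↔ ∑ i, (l i).length = N ∧ ∀ i, isPKlist m (l i) := by
  simp only [PKTuples, mem_biUnion, Fintype.mem_piFinset, mem_image, Nat.mem_antidiagonalTuple]
  constructor
  · rintro ⟨s, hs, h⟩
    choose q hq hql using h
    exact ⟨by simp [← hql, hs], fun i => hql i ▸ isPKlist_ofFn.mpr (hq i)⟩
  · rintro ⟨hs, h⟩
    exact ⟨fun i => (l i).length, hs, fun i =>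
      ⟨(l i).get, isPKlist_ofFn.mp (by rw [List.ofFn_get]; exact h i), List.ofFn_get _⟩⟩

lemma sum_PKTuples (f : Fin k → List ℕ → β) :
    ∑ l ∈ PKTuples m k N, ∏ i, f i (l i) =
      ∑ s ∈ Nat.antidiagonalTuple k N, ∏ i, ∑ q ∈ PK m (s i), f i (List.ofFn q) := by
  rw [PKTuples, sum_biUnion]
  · refine sum_congr rfl fun s _ => ?_
    rw [← prod_univ_sum]
    exact prod_congr rfl fun i _ => sum_image fun q _ q' _ h => List.ofFn_injective h
  · intro s _ s' _ hne
    refine disjoint_left.mpr fun l hl hl' => hne (funext fun i => ?_)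
    rw [Fintype.mem_piFinset] at hl hl'
    obtain ⟨q, -, hq⟩ := mem_image.mp (hl i)
    obtain ⟨q', -, hq'⟩ := mem_image.mp (hl' i)
    simpa using congrArg List.length (hq.trans hq'.symm)

lemma sum_prod_FRD {n : ℕ} (hn : 1 ≤ n) (f : Fin (m + 1) → List ℕ → β) :
    ∑ p ∈ PK m n, ∏ i, f i (FRD m p i) =
      ∑ s ∈ Nat.antidiagonalTuple (m + 1) (n - 1), ∏ i, ∑ q ∈ PK m (s i), f i (List.ofFn q) := by
  rw [← sum_PKTuples]
  refine sum_nbij' (fun p i => FRD m p i) (glue m n) (fun p hp => ?_) (fun l hl => ?_)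
    (fun p hp => glue_FRD hp hn) (fun l hl => ?_) (fun _ _ => rfl)
  · exact mem_PKTuples.mpr ⟨sum_length_FRD hn p, fun i => isPKlist_FRD hp hn (by omega)⟩
  · obtain ⟨hsum, hl⟩ := mem_PKTuples.mp hl
    exact glue_mem_PK hsum hl
  · obtain ⟨hsum, hl⟩ := mem_PKTuples.mp hl
    exact funext (FRD_glue hsum hl hn)

end Tuples

def luckSeries (m k : ℕ) : PowerSeries ℕ := PowerSeries.mk fun n => Cnt m n k

def sizeSeries (m : ℕ) : PowerSeries ℕ := PowerSeries.mk fun n => (PK m n).card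

section Statistics

variable {m : ℕ} {S : Fin (m + 1) → (n : ℕ) → (Fin n → ℕ) → ℕ} {c : Fin (m + 1) → ℕ}
  (hdist : ∀ (i : Fin (m + 1)) (n k : ℕ),
    ((PK m n).filter (fun p => S i n p = k)).card = Cnt m n k)
  (hrec : ∀ (i : Fin (m + 1)) (n : ℕ), 1 ≤ n → ∀ p ∈ PK m n,
    S i n p = S i (FRD m p (i : ℕ)).length (fun t => (FRD m p (i : ℕ)).get t) + c i)

include hdist in
lemma Cnt_stat_eq_one_of_PK_eq_singleton {n : ℕ} {p : Fin n → ℕ} (h : PK m n = {p})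
    (i : Fin (m + 1)) : Cnt m n (S i n p) = 1 := by
  rw [← hdist, h, filter_singleton, if_pos rfl, card_singleton]

include hdist in
lemma stat_le {n : ℕ} {p : Fin n → ℕ} (hp : p ∈ PK m n) (i : Fin (m + 1)) : S i n p ≤ n := by
  by_contra! h
  have := hdist i n (S i n p)
  rw [Cnt_eq_zero_of_lt h, card_eq_zero, filter_eq_empty_iff] at this
  exact this hp rfl

include hdist hrec in
lemma c_eq_one (i : Fin (m + 1)) : c i = 1 := by
  let p : Fin 1 → ℕ := fun _ => 1
  have hFRD : FRD m p i = List.ofFn Fin.elim0 := by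
    rw [List.ofFn_zero, ← List.length_eq_zero_iff, length_FRD]
    have := ffixE_le m p le_rfl (i + 1)
    have := two_le_ffixE m p le_rfl i
    omega
  have h := hrec i 1 le_rfl p (by simp [p, PK_one])
  have h0 := Cnt_stat_eq_one_of_PK_eq_singleton hdist (PK_zero m) i
  have h1 := Cnt_stat_eq_one_of_PK_eq_singleton hdist (p := p) (PK_one m) i
  rw [hFRD, apply_length_ofFn (S i)] at h
  rw [Cnt_zero] at h0
  rw [Cnt_one] at h1
  split_ifs at h0 h1
  omega

include hdist in
lemma sum_comp_stat {R : Type*} [Semiring R] (i : Fin (m + 1)) {a N : ℕ} (haN : a ≤ N)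
    (g : ℕ → R) : ∑ q ∈ PK m a, g (S i a q) = ∑ k ∈ range (N + 1), (Cnt m a k : R) * g k := by
  rw [← sum_fiberwise_of_maps_to (g := S i a) (t := range (N + 1))
    fun q hq => mem_range.mpr (Nat.lt_succ_of_le ((stat_le hdist hq i).trans haN))]
  refine sum_congr rfl fun k _ => ?_
  rw [sum_congr rfl fun q hq => by rw [(mem_filter.mp hq).2], sum_const, hdist, nsmul_eq_mul]

include hdist hrec in
lemma Cnt_succ_succ (a k : ℕ) :
    Cnt m (a + 1) (k + 1) = PowerSeries.coeff a (luckSeries m k * sizeSeries m ^ m) := by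
  -- `S₀` only sees `P₁`; each other part `Pᵢ` ranges freely over `PK m (sᵢ)`.
  let f : Fin (m + 1) → List ℕ → ℕ :=
    Fin.cons (fun l => if S 0 l.length l.get = k then 1 else 0) fun _ _ => 1
  have hp : ∀ p ∈ PK m (a + 1),
      (if S 0 (a + 1) p = k + 1 then 1 else 0) = ∏ i, f i (FRD m p i) := by
    intro p hp
    rw [Fin.prod_univ_succ, hrec 0 _ (by omega) p hp, c_eq_one hdist hrec]
    simp only [f, Fin.cons_zero, Fin.cons_succ, prod_const_one, mul_one, add_left_inj]
  have hq : ∀ s : Fin (m + 1) → ℕ, ∏ i, ∑ q ∈ PK m (s i), f i (List.ofFn q) =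
      ∏ i, PowerSeries.coeff (s i)
        ((Fin.cons (luckSeries m k) fun _ => sizeSeries m : Fin (m + 1) → PowerSeries ℕ) i) := by
    refine fun s => prod_congr rfl fun i _ => Fin.cases ?_ (fun j => ?_) i
    · simp only [f, Fin.cons_zero, apply_length_ofFn (S 0)]
      rw [← card_filter, hdist, luckSeries, PowerSeries.coeff_mk]
    · simp [f, sizeSeries]
  rw [← hdist 0, card_filter, sum_congr rfl hp, sum_prod_FRD (by omega), Nat.add_sub_cancel]
  simp_rw [hq]
  rw [← PowerSeries.coeff_prod_eq_sum_antidiagonalTuple, Fin.prod_univ_succ]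
  simp

include hdist hrec in
lemma luckSeries_eq (k : ℕ) : luckSeries m k = (PowerSeries.X * sizeSeries m ^ m) ^ k := by
  induction k with
  | zero =>
    ext (_ | a)
    · simp [luckSeries, Cnt_zero]
    · simp [luckSeries, Cnt_succ_zero, PowerSeries.coeff_one]
  | succ k ih =>
    ext (_ | a)
    · simp [luckSeries, Cnt_zero, pow_succ]
    · rw [luckSeries, PowerSeries.coeff_mk, Cnt_succ_succ hdist hrec, ih,
        show ∀ U V : PowerSeries ℕ, (U * V) ^ (k + 1) = U * ((U * V) ^ k * V) by intros; ring,
        PowerSeries.coeff_succ_X_mul]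

include hdist hrec in
lemma sum_prod_Cnt (N : ℕ) (α : Fin (m + 1) → ℕ) :
    ∑ s ∈ Nat.antidiagonalTuple (m + 1) N, ∏ i, Cnt m (s i) (α i) = Cnt m N (∑ i, α i) :=
  calc ∑ s ∈ Nat.antidiagonalTuple (m + 1) N, ∏ i, Cnt m (s i) (α i)
      = PowerSeries.coeff N (∏ i, luckSeries m (α i)) := by
        simp [PowerSeries.coeff_prod_eq_sum_antidiagonalTuple, luckSeries]
    _ = PowerSeries.coeff N (luckSeries m (∑ i, α i)) := by
        simp only [luckSeries_eq hdist hrec, prod_pow_eq_pow_sum]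
    _ = Cnt m N (∑ i, α i) := PowerSeries.coeff_mk _ _

include hdist hrec in
lemma sum_prod_sum_Cnt_mul_X_pow (N : ℕ) :
    ∑ s ∈ Nat.antidiagonalTuple (m + 1) N, ∏ i, ∑ k ∈ range (N + 1),
        (Cnt m (s i) k : MvPolynomial (Fin (m + 1)) ℤ) * MvPolynomial.X i ^ k =
      ∑ k ∈ range (N + 1), (Cnt m N k : MvPolynomial (Fin (m + 1)) ℤ) * hfull (m + 1) k := by
  simp_rw [prod_univ_sum, prod_mul_distrib]
  rw [sum_comm]
  simp_rw [← sum_mul, ← Nat.cast_prod, ← Nat.cast_sum, sum_prod_Cnt hdist hrec]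
  rw [sum_piFinset_range_eq_sum_antidiagonalTuple _
    fun α h => by rw [Cnt_eq_zero_of_lt h, Nat.cast_zero, zero_mul]]
  refine sum_congr rfl fun k _ => ?_
  rw [hfull, mul_sum]
  exact sum_congr rfl fun α hα => by rw [Nat.mem_antidiagonalTuple.mp hα]

end Statistics

theorem stmt16_general (m : ℕ)
    (S : Fin (m + 1) → (n : ℕ) → (Fin n → ℕ) → ℕ) (c : Fin (m + 1) → ℕ)
    (hdist : ∀ (i : Fin (m + 1)) (n k : ℕ),
      ((PK m n).filter (fun p => S i n p = k)).card = Cnt m n k)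
    (hrec : ∀ (i : Fin (m + 1)) (n : ℕ), 1 ≤ n → ∀ p ∈ PK m n,
      S i n p = S i (FRD m p (i : ℕ)).length (fun t => (FRD m p (i : ℕ)).get t) + c i)
    (n : ℕ) (hn : 1 ≤ n) :
    ∑ p ∈ PK m n,
        ∏ i : Fin (m + 1), (MvPolynomial.X i : MvPolynomial (Fin (m + 1)) ℤ) ^ S i n p =
      (∏ i : Fin (m + 1), (MvPolynomial.X i : MvPolynomial (Fin (m + 1)) ℤ) ^ c i) *
        ∑ k ∈ Finset.range n, (Cnt m (n - 1) k : MvPolynomial (Fin (m + 1)) ℤ) *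
          hfull (m + 1) k := by
  obtain ⟨N, rfl⟩ : ∃ N, n = N + 1 := ⟨n - 1, by omega⟩
  have hfactor : ∀ p ∈ PK m (N + 1),
      ∏ i, (MvPolynomial.X i : MvPolynomial (Fin (m + 1)) ℤ) ^ S i (N + 1) p =
        (∏ i, MvPolynomial.X i ^ c i) * ∏ i, MvPolynomial.X i ^ S i (FRD m p i).length
          (FRD m p i).get := fun p hp => by
    rw [← prod_mul_distrib]
    exact prod_congr rfl fun i _ => by rw [hrec i _ hn p hp, pow_add, mul_comm]
  rw [sum_congr rfl hfactor, ← mul_sum,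
    sum_prod_FRD hn fun i l => MvPolynomial.X i ^ S i l.length l.get, Nat.add_sub_cancel,
    ← sum_prod_sum_Cnt_mul_X_pow hdist hrec]
  refine congrArg _ (sum_congr rfl fun s hs => prod_congr rfl fun i _ => ?_)
  have hsi : s i ≤ N := (Nat.mem_antidiagonalTuple.mp hs) ▸ single_le_sum (by simp) (mem_univ i)
  simp only [apply_length_ofFn (S i)]
  exact sum_comp_stat hdist i hsi _

theorem stmt16 (m : ℕ) (hm : 1 ≤ m)
    (S : Fin (m + 1) → (n : ℕ) → (Fin n → ℕ) → ℕ) (c : Fin (m + 1) → ℕ)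
    (hdist : ∀ (i : Fin (m + 1)) (n k : ℕ),
      ((PK m n).filter (fun p => S i n p = k)).card = Cnt m n k)
    (hrec : ∀ (i : Fin (m + 1)) (n : ℕ), 1 ≤ n → ∀ p ∈ PK m n,
      S i n p = S i (FRD m p (i : ℕ)).length (fun t => (FRD m p (i : ℕ)).get t) + c i)
    (n : ℕ) (hn : 1 ≤ n) :
    ∑ p ∈ PK m n,
        ∏ i : Fin (m + 1), (MvPolynomial.X i : MvPolynomial (Fin (m + 1)) ℤ) ^ S i n p =
      (∏ i : Fin (m + 1), (MvPolynomial.X i : MvPolynomial (Fin (m + 1)) ℤ) ^ c i) *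
        ∑ k ∈ Finset.range n, (Cnt m (n - 1) k : MvPolynomial (Fin (m + 1)) ℤ) *
          hfull (m + 1) k :=
  stmt16_general m S c hdist hrec n hn

end
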